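/- Let n ≥ 3 be an integer, and for each prime p and each 1 ≤ i ≤ n − 2 let a_{p,i} be an integer with a_{p,1} ≠ 0 for every prime p. Then the set of isomorphism classes of filtered λ-ring structures R on ℤ[x]/(xⁿ) satisfying ψ_p^R(x) ≡ a_{p,1}x + a_{p,2}x² + ⋯ + a_{p,n−2}x^{n−2} (mod x^{n−1}) for all primes p is finite, of cardinality at most min{|a_{p,1}^{n−1} − a_{p,1}| : p prime}. -/

import Mathlib

open Polynomial

noncomputable section

/-- The truncated polynomial ring `ℤ[x]/(xⁿ)`. -/
abbrev TP (n : ℕ) : Type := Polynomial ℤ ⧸ Ideal.span {(X : Polynomial ℤ) ^ n}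

/-- The class of `x` in `ℤ[x]/(xⁿ)`. -/
def xx (n : ℕ) : TP n := Ideal.Quotient.mk _ (X : Polynomial ℤ)

/-- A filtered λ-ring structure on `ℤ[x]/(xⁿ)`, presented (via Wilkerson's theorem) as a
family of Adams operations `ψ p`, indexed by the primes `p`: each `ψ p` is a ring
endomorphism preserving the filtration ideal `(x)`, they pairwise commute, and
`ψ p r ≡ r ^ p (mod p)`. -/
structure AdamsFamily (n : ℕ) : Type where
  ψ : Nat.Primes → (TP n →+* TP n)
  maps_ideal : ∀ (p : Nat.Primes), ∀ a ∈ Ideal.span {xx n}, ψ p a ∈ Ideal.span {xx n}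
  comm : ∀ p q : Nat.Primes, (ψ p).comp (ψ q) = (ψ q).comp (ψ p)
  frob : ∀ (p : Nat.Primes) (a : TP n),
    ψ p a - a ^ (p : ℕ) ∈ Ideal.span {((p : ℕ) : TP n)}

/-- Isomorphism of filtered λ-ring structures on `ℤ[x]/(xⁿ)`: a filtration-preserving ring
automorphism intertwining the Adams operations. -/
def AdamsIso {n : ℕ} (R S : AdamsFamily n) : Prop :=
  ∃ σ : TP n ≃+* TP n,
    (Ideal.span {xx n}).map σ.toRingHom = Ideal.span {xx n} ∧
    ∀ p : Nat.Primes, σ.toRingHom.comp (R.ψ p) = (S.ψ p).comp σ.toRingHom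

/-- The prime 2 as an element of `Nat.Primes`. -/
def P2 : Nat.Primes := ⟨2, Nat.prime_two⟩

/-- The prime 3 as an element of `Nat.Primes`. -/
def P3 : Nat.Primes := ⟨3, Nat.prime_three⟩

/-!
Write `ψ_p(x) = ∑_{i ≤ n-2} a_{p,i} xⁱ + B_p x^{n-1}`. Since `x^{n-1}` is killed by `x`, the
`x^{n-1}`-coefficient of `ψ_p ψ_q(x)` is `a_{q,1} B_p + a_{p,1}^{n-1} B_q` plus a term depending
only on `a`. So for two structures `B`, `B'`, commutativity `ψ_p ψ_q = ψ_q ψ_p` gives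
`d_q (B_p - B'_p) = d_p (B_q - B'_q)` with `d_p = a_{p,1}^{n-1} - a_{p,1}`, and the Frobenius
congruence gives `p ∣ a_{p,1}`, so `d_p ≠ 0`. If `B_{p₀} - B'_{p₀} = c d_{p₀}`, then
`B_q - B'_q = c d_q` for every `q`, and the automorphism `x ↦ x + c x^{n-1}` conjugates one
structure into the other. Hence the isomorphism class is determined by `B_{p₀} mod d_{p₀}`.
-/

section CommRing

variable {A : Type*} [CommRing A]

theorem add_pow_eq_pow_of_mul_eq_zero {y t : A} (hyt : y * t = 0) (htt : t * t = 0) {k : ℕ}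
    (hk : 2 ≤ k) : (y + t) ^ k = y ^ k := by
  obtain ⟨k, rfl⟩ := Nat.exists_eq_add_of_le hk
  clear hk
  induction k with
  | zero => linear_combination 2 * hyt + htt
  | succ k ih =>
    rw [← add_assoc, pow_succ, ih, pow_succ]
    linear_combination y ^ (k + 1) * hyt

theorem pow_eq_of_sq_dvd_sub {x y c : A} {k : ℕ} (hx : x ^ (k + 1) = 0) (h : x ^ 2 ∣ y - c * x) :
    y ^ k = c ^ k * x ^ k := by
  obtain ⟨v, hv⟩ := h
  obtain ⟨w, hw⟩ : x * v ∣ (c + x * v) ^ k - c ^ k := by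
    simpa using sub_dvd_pow_sub_pow (c + x * v) c k
  rw [show y = x * (c + x * v) by linear_combination hv, mul_pow]
  linear_combination x ^ k * hw + v * w * hx

def evalIcc (m : ℕ) (b : ℕ → ℤ) (y : A) : A :=
  ∑ i ∈ Finset.Icc 1 m, (b i : A) * y ^ i

theorem map_evalIcc {B : Type*} [CommRing B] (f : A →+* B) (m : ℕ) (b : ℕ → ℤ) (y : A) :
    f (evalIcc m b y) = evalIcc m b (f y) := by
  simp [evalIcc]

theorem dvd_evalIcc (m : ℕ) (b : ℕ → ℤ) (y : A) : y ∣ evalIcc m b y :=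
  Finset.dvd_sum fun i hi =>
    (dvd_pow_self y (by rw [Finset.mem_Icc] at hi; omega)).mul_left _

theorem sq_dvd_evalIcc_sub {m : ℕ} (hm : 1 ≤ m) (b : ℕ → ℤ) (y : A) :
    y ^ 2 ∣ evalIcc m b y - b 1 * y := by
  rw [evalIcc, ← Finset.add_sum_erase _ _ (Finset.mem_Icc.mpr ⟨le_rfl, hm⟩), pow_one,
    add_sub_cancel_left]
  refine Finset.dvd_sum fun i hi => (pow_dvd_pow y ?_).mul_left _
  rw [Finset.mem_erase, Finset.mem_Icc] at hi
  omega

theorem evalIcc_add_of_mul_eq_zero {m : ℕ} (hm : 1 ≤ m) (b : ℕ → ℤ) {y t : A} (hyt : y * t = 0)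
    (htt : t * t = 0) : evalIcc m b (y + t) = evalIcc m b y + b 1 * t := by
  have h1 : 1 ∈ Finset.Icc 1 m := Finset.mem_Icc.mpr ⟨le_rfl, hm⟩
  rw [evalIcc, evalIcc, ← Finset.add_sum_erase _ _ h1, ← Finset.add_sum_erase _ _ h1]
  have hpow : ∀ i ∈ (Finset.Icc 1 m).erase 1, (b i : A) * (y + t) ^ i = b i * y ^ i := by
    intro i hi
    rw [Finset.mem_erase, Finset.mem_Icc] at hi
    rw [add_pow_eq_pow_of_mul_eq_zero hyt htt (by omega)]
  rw [Finset.sum_congr rfl hpow]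
  ring

end CommRing

theorem pow_ne_self_of_not_isUnit {M : Type*} [MonoidWithZero M] [IsRightCancelMulZero M] {c : M}
    (hc0 : c ≠ 0) (hc : ¬IsUnit c) {k : ℕ} (hk : 2 ≤ k) : c ^ k ≠ c := fun h =>
  hc <| IsUnit.of_pow_eq_one (n := k - 1) (mul_right_cancel₀ hc0 <| by
    rw [← pow_succ, Nat.sub_add_cancel (by omega), h, one_mul]) (by omega)

theorem finite_quot_and_natCard_le {α : Type*} {r : α → α → Prop} {m : ℕ} (hm : α → m ≠ 0)
    (g : α → ℤ) (hg : ∀ a b, (m : ℤ) ∣ g a - g b → r a b) :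
    Finite (Quot r) ∧ Nat.card (Quot r) ≤ m := by
  rcases isEmpty_or_nonempty α with _ | ⟨⟨a⟩⟩
  · exact ⟨inferInstance, by simp⟩
  have : NeZero m := ⟨hm a⟩
  let h : Quot r → ZMod m := fun q => g q.out
  have hinj : Function.Injective h := fun q q' hqq' => by
    rw [← Quot.out_eq q, ← Quot.out_eq q']
    exact Quot.sound (hg _ _ ((ZMod.intCast_eq_intCast_iff_dvd_sub _ _ _).mp hqq'.symm))
  exact ⟨Finite.of_injective h hinj,
    (Nat.card_le_card_of_injective h hinj).trans (Nat.card_zmod m).le⟩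

namespace TP

variable {n : ℕ}

theorem mk_X_pow (k : ℕ) :
    Ideal.Quotient.mk (Ideal.span {(X : ℤ[X]) ^ n}) (X ^ k) = xx n ^ k := by
  rw [map_pow, xx]

theorem xx_pow_eq_zero {k : ℕ} (hk : n ≤ k) : xx n ^ k = 0 := by
  rw [← mk_X_pow, Ideal.Quotient.eq_zero_iff_mem, Ideal.mem_span_singleton]
  exact pow_dvd_pow X hk

theorem mul_xx_pow_pred_eq_zero (hn : 1 ≤ n) {y : TP n} (hy : xx n ∣ y) :
    y * xx n ^ (n - 1) = 0 := by
  obtain ⟨z, rfl⟩ := hy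
  rw [mul_right_comm, ← pow_succ', Nat.sub_add_cancel hn, xx_pow_eq_zero le_rfl, zero_mul]

theorem ringHom_ext {B : Type*} [Ring B] {f g : TP n →+* B} (h : f (xx n) = g (xx n)) : f = g :=
  Ideal.Quotient.ringHom_ext (Polynomial.ringHom_ext' (RingHom.ext_int _ _) h)

def lift {B : Type*} [CommRing B] (y : B) (hy : y ^ n = 0) : TP n →+* B :=
  Ideal.Quotient.lift _ (eval₂RingHom (Int.castRingHom B) y) fun P hP => by
    obtain ⟨Q, rfl⟩ := Ideal.mem_span_singleton'.mp hP
    simp [hy]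

@[simp]
theorem lift_xx {B : Type*} [CommRing B] (y : B) (hy : y ^ n = 0) : lift y hy (xx n) = y := by
  simp [lift, xx]

theorem exists_eq_intCast_mul_of_mem (hn : 1 ≤ n) {e : TP n}
    (he : e ∈ Ideal.span {xx n ^ (n - 1)}) : ∃ t : ℤ, e = t * xx n ^ (n - 1) := by
  obtain ⟨w, rfl⟩ := Ideal.mem_span_singleton'.mp he
  obtain ⟨W, rfl⟩ := Ideal.Quotient.mk_surjective w
  obtain ⟨V, hV⟩ := X_dvd_sub_C (p := W)
  have hW : Ideal.Quotient.mk _ W = (W.coeff 0 : TP n) + xx n * Ideal.Quotient.mk _ V := by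
    simpa [xx] using
      congrArg (Ideal.Quotient.mk (Ideal.span {(X : ℤ[X]) ^ n})) (eq_add_of_sub_eq' hV)
  refine ⟨W.coeff 0, ?_⟩
  rw [hW, add_mul, mul_xx_pow_pred_eq_zero hn (dvd_mul_right _ _), add_zero]

theorem intCast_mul_xx_pow_pred_injective (hn : 1 ≤ n) {s t : ℤ}
    (h : (s : TP n) * xx n ^ (n - 1) = t * xx n ^ (n - 1)) : s = t := by
  have h0 : Ideal.Quotient.mk (Ideal.span {(X : ℤ[X]) ^ n}) (C (s - t) * X ^ (n - 1)) = 0 := by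
    simp only [map_mul, mk_X_pow, eq_intCast, map_sub, map_intCast]
    linear_combination h
  obtain ⟨V, hV⟩ := Ideal.mem_span_singleton'.mp (Ideal.Quotient.eq_zero_iff_mem.mp h0)
  have := congrArg (coeff · (n - 1)) hV
  simp only [coeff_mul_X_pow'] at this
  simp at this
  omega

theorem xx_mul_xx_pow_pred (hn : 1 ≤ n) : xx n * xx n ^ (n - 1) = 0 :=
  mul_xx_pow_pred_eq_zero hn dvd_rfl

theorem xx_pow_pred_mul_self (hn : 2 ≤ n) : xx n ^ (n - 1) * xx n ^ (n - 1) = 0 := by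
  rw [← pow_add]; exact xx_pow_eq_zero (by omega)

theorem xx_dvd_xx_add (hn : 2 ≤ n) (c : ℤ) : xx n ∣ xx n + c * xx n ^ (n - 1) :=
  dvd_add dvd_rfl ((dvd_pow_self _ (by omega)).mul_left _)

theorem xx_add_pow_pred (hn : 3 ≤ n) (c : ℤ) :
    (xx n + c * xx n ^ (n - 1)) ^ (n - 1) = xx n ^ (n - 1) := by
  have h : xx n ^ 2 ∣ xx n + c * xx n ^ (n - 1) - 1 * xx n := by
    rw [one_mul, add_sub_cancel_left]
    exact (pow_dvd_pow _ (by omega)).mul_left _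
  rw [pow_eq_of_sq_dvd_sub (xx_pow_eq_zero (by omega)) h, one_pow, one_mul]

def shiftHom (hn : 3 ≤ n) (c : ℤ) : TP n →+* TP n :=
  lift (xx n + c * xx n ^ (n - 1)) <| zero_dvd_iff.mp <|
    xx_pow_eq_zero (n := n) le_rfl ▸ pow_dvd_pow_of_dvd (xx_dvd_xx_add (by omega) c) n

theorem shiftHom_xx (hn : 3 ≤ n) (c : ℤ) : shiftHom hn c (xx n) = xx n + c * xx n ^ (n - 1) :=
  lift_xx _ _

theorem shiftHom_comp (hn : 3 ≤ n) (c d : ℤ) :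
    (shiftHom hn c).comp (shiftHom hn d) = shiftHom hn (c + d) := by
  refine ringHom_ext ?_
  rw [RingHom.comp_apply, shiftHom_xx, map_add, map_mul, map_intCast, map_pow, shiftHom_xx,
    xx_add_pow_pred hn, shiftHom_xx]
  push_cast
  ring

theorem shiftHom_zero (hn : 3 ≤ n) : shiftHom hn 0 = RingHom.id (TP n) :=
  ringHom_ext (by simp [shiftHom_xx])

def shift (hn : 3 ≤ n) (c : ℤ) : TP n ≃+* TP n :=
  RingEquiv.ofRingHom (shiftHom hn c) (shiftHom hn (-c))
    (by rw [shiftHom_comp, add_neg_cancel, shiftHom_zero])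
    (by rw [shiftHom_comp, neg_add_cancel, shiftHom_zero])

theorem shift_toRingHom (hn : 3 ≤ n) (c : ℤ) : (shift hn c).toRingHom = shiftHom hn c := rfl

theorem map_shift_span_xx (hn : 3 ≤ n) (c : ℤ) :
    (Ideal.span {xx n}).map (shift hn c).toRingHom = Ideal.span {xx n} := by
  have hnil : IsNilpotent ((c : TP n) * xx n ^ (n - 2)) :=
    (Commute.all _ _).isNilpotent_mul_left
      ⟨n, by rw [← pow_mul]; exact xx_pow_eq_zero (Nat.le_mul_of_pos_left n (by omega))⟩
  have hx : xx n + c * xx n ^ (n - 1) = xx n * (1 + c * xx n ^ (n - 2)) := by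
    rw [show n - 1 = n - 2 + 1 by omega, pow_succ]; ring
  rw [Ideal.map_span, Set.image_singleton, shift_toRingHom, shiftHom_xx, hx,
    Ideal.span_singleton_mul_right_unit hnil.isUnit_one_add]

end TP

section Expansion

variable {n : ℕ}

def HasExpansion (f : TP n →+* TP n) (b : ℕ → ℤ) (B : ℤ) : Prop :=
  f (xx n) = evalIcc (n - 2) b (xx n) + B * xx n ^ (n - 1)

variable {f g : TP n →+* TP n} {b c : ℕ → ℤ} {B C : ℤ}

theorem exists_hasExpansion (hn : 1 ≤ n)
    (h : f (xx n) - evalIcc (n - 2) b (xx n) ∈ Ideal.span {xx n ^ (n - 1)}) :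
    ∃ B, HasExpansion f b B := by
  obtain ⟨B, hB⟩ := TP.exists_eq_intCast_mul_of_mem hn h
  exact ⟨B, by rw [HasExpansion, ← hB, add_sub_cancel]⟩

theorem HasExpansion.sq_dvd_sub (hn : 3 ≤ n) (hf : HasExpansion f b B) :
    xx n ^ 2 ∣ f (xx n) - b 1 * xx n := by
  rw [hf, add_sub_right_comm]
  exact dvd_add (sq_dvd_evalIcc_sub (by omega) b _) ((pow_dvd_pow _ (by omega)).mul_left _)

theorem HasExpansion.pow_pred (hn : 3 ≤ n) (hf : HasExpansion f b B) :
    f (xx n) ^ (n - 1) = (b 1 ^ (n - 1) : ℤ) * xx n ^ (n - 1) := by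
  rw [pow_eq_of_sq_dvd_sub (TP.xx_pow_eq_zero (by omega)) (hf.sq_dvd_sub hn), Int.cast_pow]

theorem HasExpansion.apply_apply (hn : 3 ≤ n) (hf : HasExpansion f b B)
    (hg : HasExpansion g c C) :
    f (g (xx n)) = evalIcc (n - 2) c (evalIcc (n - 2) b (xx n))
      + (c 1 * B + b 1 ^ (n - 1) * C : ℤ) * xx n ^ (n - 1) := by
  have hS := TP.mul_xx_pow_pred_eq_zero (by omega) (dvd_evalIcc (n - 2) b (xx n))
  rw [hg, map_add, map_evalIcc, map_mul, map_intCast, map_pow, hf.pow_pred hn, hf,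
    evalIcc_add_of_mul_eq_zero (by omega) c (by linear_combination (B : TP n) * hS)
      (by linear_combination (B : TP n) ^ 2 * TP.xx_pow_pred_mul_self (n := n) (by omega))]
  push_cast
  ring

theorem HasExpansion.mul_sub_eq_mul_sub (hn : 3 ≤ n) {f₁ f₂ g₁ g₂ : TP n →+* TP n}
    {b₁ b₂ : ℕ → ℤ} {B₁ B₂ C₁ C₂ : ℤ} (hf₁ : HasExpansion f₁ b₁ B₁) (hf₂ : HasExpansion f₂ b₂ B₂)
    (hg₁ : HasExpansion g₁ b₁ C₁) (hg₂ : HasExpansion g₂ b₂ C₂)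
    (hf : f₁.comp f₂ = f₂.comp f₁) (hg : g₁.comp g₂ = g₂.comp g₁) :
    (b₂ 1 ^ (n - 1) - b₂ 1) * (B₁ - C₁) = (b₁ 1 ^ (n - 1) - b₁ 1) * (B₂ - C₂) := by
  have hf' := RingHom.congr_fun hf (xx n)
  have hg' := RingHom.congr_fun hg (xx n)
  simp only [RingHom.comp_apply] at hf' hg'
  rw [hf₁.apply_apply hn hf₂, hf₂.apply_apply hn hf₁] at hf'
  rw [hg₁.apply_apply hn hg₂, hg₂.apply_apply hn hg₁] at hg'
  refine TP.intCast_mul_xx_pow_pred_injective (n := n) (by omega) ?_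
  push_cast at hf' hg' ⊢
  linear_combination hg' - hf'

open DualNumber in
theorem HasExpansion.dvd_coeff_one (hn : 3 ≤ n) (hf : HasExpansion f b B) {p : ℕ} (hp : 2 ≤ p)
    (hfrob : f (xx n) - xx n ^ p ∈ Ideal.span {(p : TP n)}) : (p : ℤ) ∣ b 1 := by
  have hε : ∀ k, 2 ≤ k → (ε : ℤ[ε]) ^ k = 0 := fun k hk => by
    rw [← Nat.sub_add_cancel hk, pow_add, sq, eps_mul_eps, mul_zero]
  -- under `x ↦ ε` only the linear coefficient survives
  let φ := TP.lift (ε : ℤ[ε]) (hε n (by omega))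
  have hφ : φ (f (xx n) - xx n ^ p) = (b 1 : ℤ[ε]) * ε := by
    have := map_dvd φ (hf.sq_dvd_sub hn)
    rw [map_pow, TP.lift_xx, hε 2 le_rfl, zero_dvd_iff, map_sub, sub_eq_zero] at this
    rw [map_sub, this, map_mul, map_intCast, map_pow, TP.lift_xx, hε p hp, sub_zero]
  obtain ⟨w, hw⟩ := Ideal.mem_span_singleton'.mp hfrob
  refine ⟨TrivSqZeroExt.snd (φ w), ?_⟩
  have := congrArg TrivSqZeroExt.snd (hφ ▸ congrArg φ hw)
  simpa [mul_comm] using this.symm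

theorem HasExpansion.shift_comp (hn : 3 ≤ n) (hf : HasExpansion f b B)
    (hg : HasExpansion g b C) {d : ℤ}
    (h : B - C = (b 1 ^ (n - 1) - b 1) * d) :
    (TP.shift hn d).toRingHom.comp f = g.comp (TP.shift hn d).toRingHom := by
  refine TP.ringHom_ext ?_
  simp only [RingHom.comp_apply, TP.shift_toRingHom]
  rw [hf, map_add, map_evalIcc, map_mul, map_intCast, map_pow, TP.shiftHom_xx,
    TP.xx_add_pow_pred hn, map_add, map_mul, map_intCast, map_pow, hg.pow_pred hn,
    hg, evalIcc_add_of_mul_eq_zero (by omega) b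
      (by linear_combination (d : TP n) * TP.xx_mul_xx_pow_pred (n := n) (by omega))
      (by linear_combination (d : TP n) ^ 2 * TP.xx_pow_pred_mul_self (n := n) (by omega))]
  rw [eq_add_of_sub_eq' h]
  push_cast
  ring

theorem adamsIso_of_dvd (hn : 3 ≤ n) {R S : AdamsFamily n} {a : Nat.Primes → ℕ → ℤ}
    {B C : Nat.Primes → ℤ} (hR : ∀ p, HasExpansion (R.ψ p) (a p) (B p))
    (hS : ∀ p, HasExpansion (S.ψ p) (a p) (C p)) {p₀ : Nat.Primes}
    (hd : a p₀ 1 ^ (n - 1) - a p₀ 1 ≠ 0) (h : a p₀ 1 ^ (n - 1) - a p₀ 1 ∣ B p₀ - C p₀) :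
    AdamsIso R S := by
  obtain ⟨d, hd₀⟩ := h
  refine ⟨TP.shift hn d, TP.map_shift_span_xx hn d, fun q => (hR q).shift_comp hn (hS q) ?_⟩
  refine mul_left_cancel₀ hd ?_
  rw [← (hR p₀).mul_sub_eq_mul_sub hn (hR q) (hS p₀) (hS q) (R.comm p₀ q) (S.comm p₀ q), hd₀]
  ring

end Expansion

def HasTruncation {n : ℕ} (a : Nat.Primes → ℕ → ℤ) (R : AdamsFamily n) : Prop :=
  ∀ p, R.ψ p (xx n) - evalIcc (n - 2) (a p) (xx n) ∈ Ideal.span {xx n ^ (n - 1)}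

theorem finite_quot_adamsIso_and_natCard_le {n : ℕ} (hn : 3 ≤ n) {a : Nat.Primes → ℕ → ℤ}
    (ha : ∀ p, a p 1 ≠ 0) (p₀ : Nat.Primes) :
    Finite (Quot fun R S : {R : AdamsFamily n // HasTruncation a R} => AdamsIso R.1 S.1) ∧
      Nat.card (Quot fun R S : {R : AdamsFamily n // HasTruncation a R} => AdamsIso R.1 S.1) ≤
        (a p₀ 1 ^ (n - 1) - a p₀ 1).natAbs := by
  choose B hB using fun (R : {R : AdamsFamily n // HasTruncation a R}) p =>
    exists_hasExpansion (by omega) (R.2 p)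
  have hd : ∀ R, a p₀ 1 ^ (n - 1) - a p₀ 1 ≠ 0 := fun R => by
    have hdvd := (hB R p₀).dvd_coeff_one hn p₀.2.two_le (R.1.frob p₀ (xx n))
    refine sub_ne_zero.mpr (pow_ne_self_of_not_isUnit (ha p₀) (fun hu => ?_) (by omega))
    exact (Nat.prime_iff_prime_int.mp p₀.2).not_isUnit (isUnit_of_dvd_unit hdvd hu)
  exact finite_quot_and_natCard_le (fun R => Int.natAbs_ne_zero.mpr (hd R)) (fun R => B R p₀)
    fun R S h => adamsIso_of_dvd hn (hB R) (hB S) (hd R) (Int.natAbs_dvd.mp h)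

theorem stmt16 (n : ℕ) (hn : 3 ≤ n) (a : Nat.Primes → ℕ → ℤ)
    (ha : ∀ p : Nat.Primes, a p 1 ≠ 0) :
    Finite (Quot (fun (R S : {R : AdamsFamily n //
        ∀ p : Nat.Primes,
          R.ψ p (xx n) - ∑ i ∈ Finset.Icc 1 (n - 2), (a p i : TP n) * xx n ^ i
            ∈ Ideal.span {xx n ^ (n - 1)}}) => AdamsIso R.1 S.1)) ∧
    Nat.card (Quot (fun (R S : {R : AdamsFamily n //
        ∀ p : Nat.Primes,
          R.ψ p (xx n) - ∑ i ∈ Finset.Icc 1 (n - 2), (a p i : TP n) * xx n ^ i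
            ∈ Ideal.span {xx n ^ (n - 1)}}) => AdamsIso R.1 S.1)) ≤
      sInf {m : ℕ | ∃ p : Nat.Primes, m = (a p 1 ^ (n - 1) - a p 1).natAbs} := by
  obtain ⟨p₀, hp₀⟩ : sInf {m : ℕ | ∃ p : Nat.Primes, m = (a p 1 ^ (n - 1) - a p 1).natAbs} ∈
      {m : ℕ | ∃ p : Nat.Primes, m = (a p 1 ^ (n - 1) - a p 1).natAbs} :=
    Nat.sInf_mem ⟨_, P2, rfl⟩
  rw [hp₀]
  exact finite_quot_adamsIso_and_natCard_le hn ha p₀
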